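/- Let G be a finite group, π a set of primes, and p the smallest prime in π. Suppose that for every non-trivial π-element x of G, |C_G(x)_π| ≤ |G_π|/p, and that G has no normal Hall π-subgroup (so |G_π| ≥ p²). Then Pr_π(G) ≤ (p² + p − 1)/p³, where Pr_π(G) = |{(x,y) ∈ G_π × G_π : xy=yx}| / |G_π|². -/

import Mathlib

/-!
Counting commuting pairs by their first coordinate, `|{(x, y) ∈ G_π² : xy = yx}|` is the sum of
`|C_G(x)_π|` over `x ∈ G_π`. The term `x = 1` contributes `N = |G_π|` and each of the other
`N - 1` terms at most `N / p`. Since `G` is not a `π'`-group (otherwise `1` would be a normal Hall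
`π`-subgroup), some `x ≠ 1` is a `π`-element, and `⟨x⟩ ≤ C_G(x)_π` gives
`p ≤ |x| ≤ N / p`, i.e. `N ≥ p²`, which is exactly what turns
`(N + (N - 1) N / p) / N²` into a bound by `(p² + p - 1) / p³`.
-/

open Finset

def IsPiElement {G : Type*} [Monoid G] (π : Set ℕ) (g : G) : Prop :=
  ∀ q : ℕ, q.Prime → q ∣ orderOf g → q ∈ π

section PiElement

variable {G : Type*} [Group G] {π : Set ℕ}

theorem isPiElement_one : IsPiElement π (1 : G) :=
  fun _ hq hdvd => absurd (orderOf_one (G := G) ▸ hdvd) hq.not_dvd_one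

theorem IsPiElement.of_orderOf_dvd {x y : G} (hx : IsPiElement π x) (h : orderOf y ∣ orderOf x) :
    IsPiElement π y :=
  fun q hq hdvd => hx q hq (hdvd.trans h)

theorem IsPiElement.zpow {x : G} (hx : IsPiElement π x) (k : ℤ) : IsPiElement π (x ^ k) :=
  hx.of_orderOf_dvd <| orderOf_dvd_of_pow_eq_one <| by
    rw [← zpow_natCast, ← zpow_mul, mul_comm, zpow_mul, zpow_natCast, pow_orderOf_eq_one, one_zpow]

theorem orderOf_le_card_commute_isPiElement [Finite G] {x : G} (hx : IsPiElement π x) :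
    orderOf x ≤ Nat.card {y : G | Commute x y ∧ IsPiElement π y} := by
  rw [← Nat.card_zpowers]
  refine Nat.card_mono (Set.toFinite _) ?_
  rintro _ ⟨k, rfl⟩
  exact ⟨(Commute.refl x).zpow_right k, hx.zpow k⟩

theorem le_orderOf_of_isPiElement [Finite G] {p : ℕ} (hpmin : ∀ q ∈ π, p ≤ q) {x : G}
    (hx1 : x ≠ 1) (hx : IsPiElement π x) : p ≤ orderOf x := by
  have hord : orderOf x ≠ 1 := by rwa [Ne, orderOf_eq_one_iff]
  calc p ≤ (orderOf x).minFac := hpmin _ (hx _ (Nat.minFac_prime hord) (Nat.minFac_dvd _))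
    _ ≤ orderOf x := Nat.minFac_le (orderOf_pos x)

/-- If `G` had no non-trivial `π`-element, the trivial subgroup would be a normal Hall
`π`-subgroup: by Cauchy, every prime divisor of `|G|` is the order of a `π`-element. -/
theorem exists_ne_one_isPiElement [Finite G]
    (hHall : ¬ ∃ H : Subgroup G, H.Normal ∧
      (∀ q : ℕ, q.Prime → q ∣ Nat.card H → q ∈ π) ∧
      (∀ q : ℕ, q.Prime → q ∣ H.index → q ∉ π)) :
    ∃ x : G, x ≠ 1 ∧ IsPiElement π x := by
  by_contra! h
  refine hHall ⟨⊥, inferInstance, fun q hq hdvd => ?_, fun q hq hdvd hqπ => ?_⟩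
  · exact absurd (Subgroup.card_bot (G := G) ▸ hdvd) hq.not_dvd_one
  · rw [Subgroup.index_bot] at hdvd
    have := Fact.mk hq
    obtain ⟨x, hx⟩ := exists_prime_orderOf_dvd_card' q hdvd
    have hx1 : x ≠ 1 := by
      rintro rfl
      exact hq.ne_one (orderOf_one (G := G) ▸ hx).symm
    refine h x hx1 fun r hr hrdvd => ?_
    rw [hx, Nat.prime_dvd_prime_iff_eq hr hq] at hrdvd
    rwa [hrdvd]

end PiElement

theorem card_commuting_pairs_eq_sum {G : Type*} [Group G] [Fintype G] (P : G → Prop)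
    [DecidablePred P] :
    Nat.card {z : G × G | P z.1 ∧ P z.2 ∧ z.1 * z.2 = z.2 * z.1}
      = ∑ x ∈ univ.filter P, Nat.card {y : G | Commute x y ∧ P y} := by
  let e : {z : G × G | P z.1 ∧ P z.2 ∧ z.1 * z.2 = z.2 * z.1}
      ≃ Σ x : {x // P x}, {y // Commute x.1 y ∧ P y} :=
    { toFun := fun z => ⟨⟨z.1.1, z.2.1⟩, ⟨z.1.2, z.2.2.2, z.2.2.1⟩⟩
      invFun := fun s => ⟨(s.1.1, s.2.1), s.1.2, s.2.2.2, s.2.2.1⟩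
      left_inv := fun _ => rfl
      right_inv := fun _ => rfl }
  rw [Nat.card_congr e, Nat.card_sigma]
  exact (sum_subtype _ (by simp) (fun x => Nat.card {y : G | Commute x y ∧ P y})).symm

section OrderedField

variable {K : Type*} [Field K] [LinearOrder K] [IsStrictOrderedRing K]

theorem sum_le_add_card_sub_one_mul {ι : Type*} [DecidableEq ι] {s : Finset ι} {a : ι}
    (ha : a ∈ s) (f : ι → K) {B : K} (hB : ∀ x ∈ s, x ≠ a → f x ≤ B) :
    ∑ x ∈ s, f x ≤ f a + (#s - 1) * B := by
  rw [← add_sum_erase s f ha]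
  have := sum_le_card_nsmul (s.erase a) f B fun x hx =>
    hB x (mem_of_mem_erase hx) (ne_of_mem_erase hx)
  rw [card_erase_of_mem ha, nsmul_eq_mul, Nat.cast_sub (one_le_card.mpr ⟨a, ha⟩)] at this
  push_cast at this
  linarith

theorem add_sub_one_mul_div_le {N p : K} (hp : 1 ≤ p) (hN : p ^ 2 ≤ N) :
    N + (N - 1) * (N / p) ≤ (p ^ 2 + p - 1) / p ^ 3 * N ^ 2 := by
  have hp0 : 0 < p := by linarith
  -- `p³ · (right side - left side) = (N - p²) · N · (p - 1)`
  have key : 0 ≤ (N - p ^ 2) * (N * (p - 1)) := mul_nonneg (by linarith) (by nlinarith)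
  rw [div_mul_eq_mul_div, le_div_iff₀ (by positivity)]
  field_simp
  nlinarith [key]

end OrderedField

/-- Let `p` be the smallest prime in a set of primes `π`. If every non-trivial
`π`-element `x` of the finite group `G` satisfies `|C_G(x)_π| ≤ |G_π|/p`, and
`G` has no normal Hall `π`-subgroup (so that `|G_π| ≥ p²`), then
`Pr_π(G) ≤ (p² + p - 1)/p³`. -/
theorem pr_pi_le_bound {G : Type*} [Group G] [Finite G]
    (π : Set ℕ) (hπ : ∀ q ∈ π, Nat.Prime q)
    {p : ℕ} (hpπ : p ∈ π) (hpmin : ∀ q ∈ π, p ≤ q)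
    (hcent : ∀ x : G, x ≠ 1 → (∀ q : ℕ, q.Prime → q ∣ orderOf x → q ∈ π) →
      (Nat.card {y : G | Commute x y ∧ ∀ q : ℕ, q.Prime → q ∣ orderOf y → q ∈ π} : ℝ)
        ≤ (Nat.card {g : G | ∀ q : ℕ, q.Prime → q ∣ orderOf g → q ∈ π} : ℝ) / p)
    (hHall : ¬ ∃ H : Subgroup G, H.Normal ∧
      (∀ q : ℕ, q.Prime → q ∣ Nat.card H → q ∈ π) ∧
      (∀ q : ℕ, q.Prime → q ∣ H.index → q ∉ π)) :
    (Nat.card {z : G × G | (∀ q : ℕ, q.Prime → q ∣ orderOf z.1 → q ∈ π) ∧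
        (∀ q : ℕ, q.Prime → q ∣ orderOf z.2 → q ∈ π) ∧ z.1 * z.2 = z.2 * z.1} : ℝ)
      / (Nat.card {g : G | ∀ q : ℕ, q.Prime → q ∣ orderOf g → q ∈ π} : ℝ) ^ 2
      ≤ (p ^ 2 + p - 1) / p ^ 3 := by
  classical
  have := Fintype.ofFinite G
  have hp : (1 : ℝ) ≤ p := by exact_mod_cast (hπ p hpπ).one_le
  change (Nat.card {z : G × G | IsPiElement π z.1 ∧ IsPiElement π z.2 ∧ z.1 * z.2 = z.2 * z.1} : ℝ)
    / (Nat.card {g : G | IsPiElement π g} : ℝ) ^ 2 ≤ _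
  replace hcent : ∀ x : G, x ≠ 1 → IsPiElement π x →
      (Nat.card {y : G | Commute x y ∧ IsPiElement π y} : ℝ)
        ≤ Nat.card {g : G | IsPiElement π g} / p := hcent
  set N : ℕ := Nat.card {g : G | IsPiElement π g}
  have hN : N = #(univ.filter (IsPiElement π)) := Nat.subtype_card _ (by simp)
  have hN_ge : (p : ℝ) ^ 2 ≤ N := by
    obtain ⟨x, hx1, hx⟩ := exists_ne_one_isPiElement hHall
    have hpx : (p : ℝ) ≤ Nat.card {y : G | Commute x y ∧ IsPiElement π y} := by
      exact_mod_cast (le_orderOf_of_isPiElement hpmin hx1 hx).trans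
        (orderOf_le_card_commute_isPiElement hx)
    rw [sq, ← le_div_iff₀ (by positivity)]
    exact hpx.trans (hcent x hx1 hx)
  have hpairs : (Nat.card {z : G × G | IsPiElement π z.1 ∧ IsPiElement π z.2 ∧
      z.1 * z.2 = z.2 * z.1} : ℝ) ≤ N + (N - 1) * (N / p) := by
    rw [card_commuting_pairs_eq_sum]
    push_cast
    refine (sum_le_add_card_sub_one_mul (mem_filter.mpr ⟨mem_univ 1, isPiElement_one⟩) _
      fun x hx hx1 => hcent x hx1 (mem_filter.mp hx).2).trans_eq ?_
    simp only [Commute.one_left, true_and, ← hN]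
    rfl
  have hN0 : (0 : ℝ) < N := (by positivity : (0 : ℝ) < p ^ 2).trans_le hN_ge
  rw [div_le_iff₀ (pow_pos hN0 2)]
  exact hpairs.trans (add_sub_one_mul_div_le hp hN_ge)
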